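/- arXiv:1804.06572 — 2 statements merged into one kernel-verified Lean document; each statement's English description precedes it below -/
import Mathlib

section
/- Let Φ be a crystallographic root system and R ⊆ Φ. The following are equivalent: (i) for all α, β ∈ R with α + β ∈ Φ one has α + β ∈ R; (iii) for all α₁, …, α_p ∈ R with α₁ + ⋯ + α_p ∈ Φ one has α₁ + ⋯ + α_p ∈ R. -/
open Pointwise

structure RootSys (V : Type*) [NormedAddCommGroup V] [InnerProductSpace ℝ V] where
  Φ : Set V
  finite : Φ.Finite
  nonzero : ∀ α ∈ Φ, α ≠ (0 : V)
  line : ∀ α ∈ Φ, Φ ∩ {x : V | ∃ t : ℝ, x = t • α} = {α, -α}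
  reflect : ∀ α ∈ Φ, ∀ β ∈ Φ, β - (2 * (inner ℝ α β : ℝ) / (inner ℝ α α : ℝ)) • α ∈ Φ

variable {V : Type*} [NormedAddCommGroup V] [InnerProductSpace ℝ V]

/-- `Φ` is crystallographic: `⟨α^∨, β⟩ ∈ ℤ` for all roots `α, β`. -/
def RootSys.IsCrystallographic (R : RootSys V) : Prop :=
  ∀ α ∈ R.Φ, ∀ β ∈ R.Φ, ∃ n : ℤ, 2 * (inner ℝ α β : ℝ) / (inner ℝ α α : ℝ) = (n : ℝ)

/-- A subset `S ⊆ Φ` is closed if it is stable under sums of two elements staying in `Φ`. -/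
def RootSys.IsClosedSubset (R : RootSys V) (S : Set V) : Prop :=
  ∀ α ∈ S, ∀ β ∈ S, α + β ∈ R.Φ → α + β ∈ S

/-- A set of roots is antisymmetric if it never contains both `α` and `-α`. -/
def IsAntisymSet (S : Set V) : Prop := ∀ α ∈ S, -α ∉ S

/-- A `Φ`-poset: an antisymmetric closed subset of `Φ`. -/
def RootSys.IsPoset (R : RootSys V) (S : Set V) : Prop :=
  S ⊆ R.Φ ∧ IsAntisymSet S ∧ R.IsClosedSubset S

/-- Closure: roots that are nonnegative integer combinations (multiset sums) of elements of `T`. -/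
def RootSys.clos (R : RootSys V) (T : Set V) : Set V :=
  {γ ∈ R.Φ | ∃ M : Multiset V, (∀ x ∈ M, x ∈ T) ∧ M.sum = γ}

/-- Nonnegative integer combinations (multiset sums) of elements of `T`. -/
def nncomb (T : Set V) : Set V :=
  {v | ∃ M : Multiset V, (∀ x ∈ M, x ∈ T) ∧ M.sum = v}

/-- A root system equipped with a generic linear functional determining positive roots. -/
structure PosRootSys (V : Type*) [NormedAddCommGroup V] [InnerProductSpace ℝ V]
    extends RootSys V where
  f : V →ₗ[ℝ] ℝ
  generic : ∀ α ∈ Φ, f α ≠ 0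

def PosRootSys.Pos (P : PosRootSys V) : Set V := {α ∈ P.Φ | 0 < P.f α}

def PosRootSys.Neg (P : PosRootSys V) : Set V := {α ∈ P.Φ | P.f α < 0}

/-- The weak order: `R ≼ S` iff `R⁺ ⊇ S⁺` and `R⁻ ⊆ S⁻`. -/
def PosRootSys.wle (P : PosRootSys V) (R S : Set V) : Prop :=
  S ∩ P.Pos ⊆ R ∩ P.Pos ∧ R ∩ P.Neg ⊆ S ∩ P.Neg

/-- `R` is semiclosed if both `R⁺` and `R⁻` are closed. -/
def PosRootSys.SemiClosed (P : PosRootSys V) (S : Set V) : Prop :=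
  S ⊆ P.Φ ∧ P.toRootSys.IsClosedSubset (S ∩ P.Pos) ∧
    P.toRootSys.IsClosedSubset (S ∩ P.Neg)

/-- Negative closure deletion. -/
def PosRootSys.ncd (P : PosRootSys V) (S : Set V) : Set V :=
  S \ {α | α ∈ S ∩ P.Neg ∧ ∃ X : Finset V, ↑X ⊆ S ∩ P.Pos ∧ α + X.sum id ∈ P.Φ \ S}

/-- Positive closure deletion. -/
def PosRootSys.pcd (P : PosRootSys V) (S : Set V) : Set V :=
  S \ {α | α ∈ S ∩ P.Pos ∧ ∃ X : Finset V, ↑X ⊆ S ∩ P.Neg ∧ α + X.sum id ∈ P.Φ \ S}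

/-- Meet formula on closed subsets. -/
def PosRootSys.wmeet (P : PosRootSys V) (R S : Set V) : Set V :=
  P.ncd (P.toRootSys.clos ((R ∪ S) ∩ P.Pos) ∪ ((R ∩ S) ∩ P.Neg))

/-- Join formula on closed subsets. -/
def PosRootSys.wjoin (P : PosRootSys V) (R S : Set V) : Set V :=
  P.pcd (((R ∩ S) ∩ P.Pos) ∪ P.toRootSys.clos ((R ∪ S) ∩ P.Neg))

open scoped InnerProductSpace

/-!
If a sum `s` of elements of `S` is a root, some summand `x` has `⟪s, x⟫ > 0`. For two roots with
positive inner product the Cartan integers are positive, so either one of them is `1` and the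
reflection formula gives `s - x ∈ Φ`, or both are at least `2`, which forces `s = x`. In the first
case `s - x` is the sum of the remaining summands, so induction on the multiset and closedness
under one addition give `s = (s - x) + x ∈ S`.
-/

lemma eq_of_inner_self_le_inner {x y : V} (hx : ⟪x, x⟫_ℝ ≤ ⟪x, y⟫_ℝ) (hy : ⟪y, y⟫_ℝ ≤ ⟪x, y⟫_ℝ) :
    x = y := by
  rw [← sub_eq_zero, ← real_inner_self_nonpos, real_inner_sub_sub_self]
  linarith

lemma Multiset.exists_mem_inner_pos_of_inner_sum_pos {v : V} {M : Multiset V}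
    (h : 0 < ⟪v, M.sum⟫_ℝ) : ∃ x ∈ M, 0 < ⟪v, x⟫_ℝ := by
  by_contra! hM
  have hsum : ⟪v, M.sum⟫_ℝ = (M.map (inner ℝ v)).sum := map_multiset_sum (innerₛₗ ℝ v) M
  have hle := Multiset.sum_le_card_nsmul (M.map (inner ℝ v)) 0 (by simpa using hM)
  rw [smul_zero] at hle
  linarith

namespace RootSys

variable (R : RootSys V)

lemma neg_mem {α : V} (hα : α ∈ R.Φ) : -α ∈ R.Φ := by
  have h : -α ∈ R.Φ ∩ {x : V | ∃ t : ℝ, x = t • α} := by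
    rw [R.line α hα]
    exact Or.inr rfl
  exact h.1

lemma inner_self_pos {α : V} (hα : α ∈ R.Φ) : 0 < ⟪α, α⟫_ℝ :=
  real_inner_self_pos.mpr (R.nonzero α hα)

lemma sub_mem_of_coroot_eq_one {α β : V} (hα : α ∈ R.Φ) (hβ : β ∈ R.Φ)
    (h : 2 * ⟪α, β⟫_ℝ / ⟪α, α⟫_ℝ = 1) : β - α ∈ R.Φ := by
  simpa only [h, one_smul] using R.reflect α hα β hβ

lemma coroot_eq_one_or_two_le (hcr : R.IsCrystallographic) {α β : V} (hα : α ∈ R.Φ)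
    (hβ : β ∈ R.Φ) (hpos : 0 < ⟪α, β⟫_ℝ) :
    2 * ⟪α, β⟫_ℝ / ⟪α, α⟫_ℝ = 1 ∨ 2 ≤ 2 * ⟪α, β⟫_ℝ / ⟪α, α⟫_ℝ := by
  obtain ⟨n, hn⟩ := hcr α hα β hβ
  have hn0 : (0 : ℝ) < n := hn ▸ div_pos (by positivity) (R.inner_self_pos hα)
  have : 0 < n := by exact_mod_cast hn0
  rw [hn]
  exact_mod_cast (show n = 1 ∨ 2 ≤ n by omega)

lemma inner_self_le_inner_of_two_le_coroot {α β : V} (hα : α ∈ R.Φ)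
    (h : 2 ≤ 2 * ⟪α, β⟫_ℝ / ⟪α, α⟫_ℝ) : ⟪α, α⟫_ℝ ≤ ⟪α, β⟫_ℝ := by
  rw [le_div_iff₀ (R.inner_self_pos hα)] at h
  linarith

lemma eq_or_sub_mem_of_inner_pos (hcr : R.IsCrystallographic) {α β : V} (hα : α ∈ R.Φ)
    (hβ : β ∈ R.Φ) (hpos : 0 < ⟪α, β⟫_ℝ) : α = β ∨ α - β ∈ R.Φ := by
  rcases R.coroot_eq_one_or_two_le hcr hα hβ hpos with h | hαβ
  · simpa using Or.inr (R.neg_mem (R.sub_mem_of_coroot_eq_one hα hβ h))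
  rw [← real_inner_comm α β] at hpos
  rcases R.coroot_eq_one_or_two_le hcr hβ hα hpos with h | hβα
  · exact Or.inr (R.sub_mem_of_coroot_eq_one hβ hα h)
  refine Or.inl (eq_of_inner_self_le_inner (R.inner_self_le_inner_of_two_le_coroot hα hαβ) ?_)
  rw [← real_inner_comm α β]
  exact R.inner_self_le_inner_of_two_le_coroot hβ hβα

lemma IsClosedSubset.multiset_sum_mem (hcr : R.IsCrystallographic) {S : Set V} (hS : S ⊆ R.Φ)
    (hcl : R.IsClosedSubset S) (M : Multiset V) (hMS : ∀ x ∈ M, x ∈ S)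
    (hsum : M.sum ∈ R.Φ) : M.sum ∈ S := by
  induction M using Multiset.strongInductionOn with
  | ih M IH =>
  classical
  obtain ⟨x, hxM, hxpos⟩ :=
    Multiset.exists_mem_inner_pos_of_inner_sum_pos (R.inner_self_pos hsum)
  have hxS := hMS x hxM
  rcases R.eq_or_sub_mem_of_inner_pos hcr hsum (hS hxS) hxpos with heq | hsub
  · exact heq ▸ hxS
  have hrest : (M.erase x).sum = M.sum - x := by
    rw [eq_sub_iff_add_eq', ← Multiset.sum_cons, Multiset.cons_erase hxM]
  have hrestS : M.sum - x ∈ S := hrest ▸ IH _ (Multiset.erase_lt.mpr hxM)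
    (fun y hy => hMS y (Multiset.mem_of_mem_erase hy)) (hrest ▸ hsub)
  simpa using hcl _ hrestS x hxS (by simpa using hsum)

end RootSys

theorem stmt4 (R : RootSys V) (hcr : R.IsCrystallographic)
    (S : Set V) (hS : S ⊆ R.Φ) :
    R.IsClosedSubset S ↔
      ∀ M : Multiset V, M ≠ 0 → (∀ x ∈ M, x ∈ S) → M.sum ∈ R.Φ → M.sum ∈ S := by
  refine ⟨fun hcl M _ => hcl.multiset_sum_mem R hcr hS M, fun h α hα β hβ hαβ => ?_⟩
  simpa using h {α, β} (by simp) (by simp [hα, hβ]) (by simpa using hαβ)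
end

section
/- Let Φ be a crystallographic root system and R ⊆ Φ a Φ-poset (antisymmetric and closed). Then for any α₁, …, α_p ∈ R (with repetitions allowed, p ≥ 1), α₁ + ⋯ + α_p ≠ 0. -/
open Pointwise

variable {V : Type*} [NormedAddCommGroup V] [InnerProductSpace ℝ V]

/-!
If `α₁ + ⋯ + α_p = 0` with all `αᵢ ∈ S`, then `⟪α₁, α₂ + ⋯ + α_p⟫ = -‖α₁‖² < 0`, so some `αⱼ`
makes an obtuse angle with `α₁`. By antisymmetry `αⱼ ≠ -α₁`, and two non-opposite roots at an
obtuse angle sum to a root: one of the two Cartan integers must be `-1`, since otherwise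
Cauchy–Schwarz would be an equality. By closedness `α₁ + αⱼ ∈ S`, so merging `α₁` and `αⱼ` gives
a shorter vanishing sum, and induction on `p` ends at a single root, which is nonzero.
-/

open scoped RealInnerProductSpace

lemma exists_mem_inner_neg_of_inner_sum_neg {α : V} {M : Multiset V}
    (h : ⟪α, M.sum⟫ < 0) : ∃ β ∈ M, ⟪α, β⟫ < 0 := by
  by_contra! hM
  have hsum : ⟪α, M.sum⟫ = (M.map (⟪α, ·⟫)).sum := map_multiset_sum (innerₛₗ ℝ α) M
  refine h.not_ge (hsum ▸ Multiset.sum_nonneg fun _ hx ↦ ?_)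
  obtain ⟨β, hβ, rfl⟩ := Multiset.mem_map.1 hx
  exact hM β hβ

namespace RootSys

variable (R : RootSys V)

lemma eq_or_eq_neg_of_inner_mul_inner_self_le {α β : V} (hα : α ∈ R.Φ) (hβ : β ∈ R.Φ)
    (h : ⟪α, α⟫ * ⟪β, β⟫ ≤ ⟪α, β⟫ * ⟪α, β⟫) : β = α ∨ β = -α := by
  have hCS : ‖⟪α, β⟫‖ = ‖α‖ * ‖β‖ := by
    refine le_antisymm (norm_inner_le_norm α β) ?_
    rw [Real.norm_eq_abs, ← abs_of_nonneg (by positivity : 0 ≤ ‖α‖ * ‖β‖), ← sq_le_sq]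
    calc (‖α‖ * ‖β‖) ^ 2 = ⟪α, α⟫ * ⟪β, β⟫ := by
          rw [real_inner_self_eq_norm_sq, real_inner_self_eq_norm_sq]; ring
      _ ≤ ⟪α, β⟫ * ⟪α, β⟫ := h
      _ = ⟪α, β⟫ ^ 2 := (sq _).symm
  obtain ⟨r, -, rfl⟩ := (norm_inner_eq_norm_iff (R.nonzero α hα) (R.nonzero β hβ)).1 hCS
  have hr : r • α ∈ R.Φ ∩ {x | ∃ t : ℝ, x = t • α} := ⟨hβ, r, rfl⟩
  rwa [R.line α hα] at hr

lemma add_mem_of_inner_neg (hcr : R.IsCrystallographic) {α β : V} (hα : α ∈ R.Φ)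
    (hβ : β ∈ R.Φ) (hneg : ⟪α, β⟫ < 0) (hne : β ≠ -α) : α + β ∈ R.Φ := by
  have ha := real_inner_self_pos.2 (R.nonzero α hα)
  have hb := real_inner_self_pos.2 (R.nonzero β hβ)
  obtain ⟨m, hm⟩ := hcr α hα β hβ
  obtain ⟨n, hn⟩ := hcr β hβ α hα
  rw [real_inner_comm] at hn
  have hm_neg : (m : ℝ) < 0 := hm ▸ div_neg_of_neg_of_pos (by linarith) ha
  have hn_neg : (n : ℝ) < 0 := hn ▸ div_neg_of_neg_of_pos (by linarith) hb
  have hsum_mem : ∀ {γ δ : V}, γ ∈ R.Φ → δ ∈ R.Φ → 2 * ⟪γ, δ⟫ / ⟪γ, γ⟫ = -1 → γ + δ ∈ R.Φ :=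
    fun hγ hδ h ↦ by simpa [add_comm] using (h ▸ R.reflect _ hγ _ hδ :)
  by_cases hm1 : m = -1
  · exact hsum_mem hα hβ (by rw [hm, hm1]; norm_num)
  by_cases hn1 : n = -1
  · rw [add_comm]
    exact hsum_mem hβ hα (by rw [real_inner_comm, hn, hn1]; norm_num)
  -- both Cartan integers are `≤ -2`, which forces equality in Cauchy–Schwarz
  have hm2 : (m : ℝ) ≤ -2 := by
    have : m < 0 := by exact_mod_cast hm_neg
    exact_mod_cast (by omega : m ≤ -2)
  have hn2 : (n : ℝ) ≤ -2 := by
    have : n < 0 := by exact_mod_cast hn_neg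
    exact_mod_cast (by omega : n ≤ -2)
  have hmn : (m * n : ℝ) * (⟪α, α⟫ * ⟪β, β⟫) = 4 * (⟪α, β⟫ * ⟪α, β⟫) := by
    rw [← hm, ← hn]; field_simp; ring
  have hCS : ⟪α, α⟫ * ⟪β, β⟫ ≤ ⟪α, β⟫ * ⟪α, β⟫ := by
    have h4 : (4 : ℝ) ≤ m * n := by nlinarith
    nlinarith [mul_le_mul_of_nonneg_right h4 (mul_pos ha hb).le]
  rcases R.eq_or_eq_neg_of_inner_mul_inner_self_le hα hβ hCS with rfl | rfl
  · exact absurd hneg ha.not_gt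
  · exact absurd rfl hne

end RootSys

lemma RootSys.IsPoset.add_mem_of_inner_neg {R : RootSys V} (hcr : R.IsCrystallographic)
    {S : Set V} (hS : R.IsPoset S) {α β : V} (hα : α ∈ S) (hβ : β ∈ S)
    (hneg : ⟪α, β⟫ < 0) : α + β ∈ S :=
  hS.2.2 α hα β hβ <| R.add_mem_of_inner_neg hcr (hS.1 hα) (hS.1 hβ) hneg
    fun h ↦ hS.2.1 α hα (h ▸ hβ)

theorem stmt5 (R : RootSys V) (hcr : R.IsCrystallographic)
    (S : Set V) (hS : R.IsPoset S)
    (M : Multiset V) (hM : M ≠ 0) (hMS : ∀ x ∈ M, x ∈ S) :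
    M.sum ≠ 0 := by
  induction hn : Multiset.card M using Nat.strong_induction_on generalizing M with
  | _ n ih =>
  intro hsum
  obtain ⟨α, hαM⟩ := Multiset.exists_mem_of_ne_zero hM
  obtain ⟨M', rfl⟩ := Multiset.exists_cons_of_mem hαM
  have hα0 : α ≠ 0 := R.nonzero α (hS.1 (hMS α hαM))
  have hM'sum : M'.sum = -α := eq_neg_of_add_eq_zero_right (by simpa using hsum)
  -- `⟪α, -α⟫ < 0`, so some other summand `β` makes an obtuse angle with `α` and merges with it
  obtain ⟨β, hβM', hneg⟩ := exists_mem_inner_neg_of_inner_sum_neg (α := α) (M := M')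
    (by rw [hM'sum, inner_neg_right]; exact neg_neg_of_pos (real_inner_self_pos.2 hα0))
  obtain ⟨M'', rfl⟩ := Multiset.exists_cons_of_mem hβM'
  have hαβ := hS.add_mem_of_inner_neg hcr (hMS α hαM) (hMS β (by simp)) hneg
  refine ih (Multiset.card M'' + 1) (by simp [← hn]) ((α + β) ::ₘ M'') (by simp) ?_ (by simp)
    (by simpa [add_assoc] using hsum)
  simp only [Multiset.mem_cons, forall_eq_or_imp] at hMS ⊢
  exact ⟨hαβ, hMS.2.2⟩
end
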